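/- Strong duality for the multicomponent bathtub problem: the minimum of the primal functional equals the maximum of the dual functional, min_{s ∈ 𝒳 ∩ 𝒜} 𝓕(s) = max_{α ∈ ℝ^{N+1}} J(α), both extrema being attained. -/

import Mathlib

/-!
Weak duality is pointwise: `λ_α ≤ F_i + α_i`, hence
`𝓕(s) - J(α) = Σ_i ∫ (F_i + α_i - λ_α) s_i ≥ 0`, with equality when each `s_i` vanishes off the
set where `i` attains the minimum defining `λ_α`.

`J` is Lipschitz and, because `Σ m_i = ∫ ω`, invariant under adding a constant to all `α_i`;
once `min α = 0`, a large coordinate makes `J(α)` small. So `J` has a maximizer `ᾱ`.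
Differentiating `J` at `ᾱ` in the direction `-v` gives
`Σ_i v_i m_i ≤ Σ_c (∫_{cell c} ω) max_{i ∈ c} v_i`, where `c` runs over the sets of minimizing
indices and `cell c` is where the minimizers of `F + ᾱ` are exactly `c`. By Hahn–Banach this is
the condition for distributing the masses `m` over the cells by a stochastic matrix supported
on the minimizers; splitting `ω` accordingly gives a feasible `s̄` with `𝓕(s̄) = J(ᾱ)`.
-/

open MeasureTheory
open scoped ENNReal

/-- The feasible set `𝒳 ∩ 𝒜` of the multicomponent bathtub problem: vectors of
nonnegative integrable phase contents with prescribed masses `m i` whose sum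
saturates the constraint `ω` almost everywhere on `Ω`. -/
def feasible {d N : ℕ} (Ω : Set (Fin d → ℝ)) (ω : (Fin d → ℝ) → ℝ)
    (m : Fin (N + 1) → ℝ) (s : Fin (N + 1) → (Fin d → ℝ) → ℝ) : Prop :=
  (∀ i, IntegrableOn (s i) Ω) ∧
  (∀ i, ∀ᵐ x ∂(volume.restrict Ω), 0 ≤ s i x) ∧
  (∀ i, ∫ x in Ω, s i x = m i) ∧
  (∀ᵐ x ∂(volume.restrict Ω), ∑ i, s i x = ω x)

/-- The primal linear functional `𝓕(s) = Σ_i ∫_Ω F_i s_i dx`. -/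
noncomputable def primalF {d N : ℕ} (Ω : Set (Fin d → ℝ))
    (F : Fin (N + 1) → (Fin d → ℝ) → ℝ)
    (s : Fin (N + 1) → (Fin d → ℝ) → ℝ) : ℝ :=
  ∑ i, ∫ x in Ω, F i x * s i x

/-- The dual functional `J(α) = ∫_Ω (min_j (F_j + α_j)) ω dx − Σ_i α_i m_i`. -/
noncomputable def dualJ {d N : ℕ} (Ω : Set (Fin d → ℝ)) (ω : (Fin d → ℝ) → ℝ)
    (F : Fin (N + 1) → (Fin d → ℝ) → ℝ) (m : Fin (N + 1) → ℝ)
    (α : Fin (N + 1) → ℝ) : ℝ :=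
  (∫ x in Ω, (⨅ j, (F j x + α j)) * ω x) - ∑ i, α i * m i

open Filter Topology Finset

section Cells

variable {X κ : Type*} [Fintype κ]

theorem comp_mul_eq_sum_indicator (τ : X → κ) (w : κ → ℝ) (g : X → ℝ) (x : X) :
    w (τ x) * g x = ∑ c, (τ ⁻¹' {c}).indicator (fun y => w c * g y) x := by
  refine Eq.symm <| (sum_eq_single_of_mem (τ x) (mem_univ _) fun c _ hc => ?_).trans ?_
  · exact Set.indicator_of_notMem (show x ∉ τ ⁻¹' {c} from Ne.symm hc) _
  · exact Set.indicator_of_mem (show x ∈ τ ⁻¹' {τ x} from rfl) _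

variable [MeasurableSpace X] {μ : Measure X}

theorem integrable_comp_mul {τ : X → κ} (hτ : ∀ c, MeasurableSet (τ ⁻¹' {c})) {g : X → ℝ}
    (hg : Integrable g μ) (w : κ → ℝ) : Integrable (fun x => w (τ x) * g x) μ := by
  simp_rw [comp_mul_eq_sum_indicator τ w g]
  exact integrable_finsetSum _ fun c _ => (hg.const_mul (w c)).indicator (hτ c)

theorem integral_comp_mul_eq_sum {τ : X → κ} (hτ : ∀ c, MeasurableSet (τ ⁻¹' {c})) {g : X → ℝ}
    (hg : Integrable g μ) (w : κ → ℝ) :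
    ∫ x, w (τ x) * g x ∂μ = ∑ c, w c * ∫ x in τ ⁻¹' {c}, g x ∂μ := by
  simp_rw [comp_mul_eq_sum_indicator τ w g]
  rw [integral_finsetSum _ fun c _ => (hg.const_mul (w c)).indicator (hτ c)]
  simp_rw [integral_indicator (hτ _), integral_const_mul]

end Cells

section Allocation

variable {κ ι : Type*} [Fintype ι]

def supportedStochastic (S : κ → Finset ι) : Set (κ → ι → ℝ) :=
  Set.univ.pi fun c => stdSimplex ℝ ι ∩ {q | ∀ i ∉ S c, q i = 0}

theorem isCompact_supportedStochastic (S : κ → Finset ι) :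
    IsCompact (supportedStochastic S) :=
  isCompact_univ_pi fun c => (isCompact_stdSimplex ℝ ι).inter_right <| by
    simp only [Set.ofPred_forall]
    exact isClosed_iInter fun i => isClosed_iInter fun _ =>
      isClosed_eq (continuous_apply i) continuous_const

theorem convex_supportedStochastic (S : κ → Finset ι) : Convex ℝ (supportedStochastic S) :=
  convex_pi fun c _ => (convex_stdSimplex ℝ ι).inter fun q hq r hr s t _ _ _ i hi => by
    simp [hq i hi, hr i hi]

/-- A transportation problem with supplies `a`, demands `m` and admissible routes `S` is
solvable as soon as its dual inequalities hold. -/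
theorem exists_stochastic_of_le_sum_sup' [Fintype κ] (S : κ → Finset ι) (hS : ∀ c, (S c).Nonempty)
    (a : κ → ℝ) (m : ι → ℝ)
    (h : ∀ v : ι → ℝ, ∑ i, v i * m i ≤ ∑ c, a c * (S c).sup' (hS c) v) :
    ∃ p : κ → ι → ℝ, (∀ c, p c ∈ stdSimplex ℝ ι) ∧ (∀ c, ∀ i ∉ S c, p c i = 0) ∧
      ∀ i, ∑ c, a c * p c i = m i := by
  classical
  set L : (κ → ι → ℝ) → ι → ℝ := fun p i => ∑ c, a c * p c i
  have hL : IsLinearMap ℝ L :=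
    ⟨fun p q => by ext i; simp [L, mul_add, sum_add_distrib],
     fun r p => by ext i; simp [L, mul_sum, mul_left_comm]⟩
  obtain ⟨p, hp, hpm⟩ : m ∈ L '' supportedStochastic S := by
    by_contra hm
    obtain ⟨f, u, hfP, hfm⟩ := geometric_hahn_banach_closed_point
      ((convex_supportedStochastic S).is_linear_image hL)
      ((isCompact_supportedStochastic S).image
        (hL.mk' L).continuous_of_finiteDimensional).isClosed hm
    set v : ι → ℝ := fun i => f fun k => if i = k then 1 else 0
    have hf : ∀ y, f y = ∑ i, y i * v i := (f : (ι → ℝ) →ₗ[ℝ] ℝ).pi_apply_eq_sum_univ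
    choose j hjS hj using fun c => (S c).exists_mem_eq_sup' (hS c) v
    set e : κ → ι → ℝ := fun c k => if j c = k then 1 else 0
    have he : e ∈ supportedStochastic S := fun c _ =>
      ⟨ite_eq_mem_stdSimplex ℝ (j c), fun i hi => if_neg (by rintro rfl; exact hi (hjS c))⟩
    have hfe : f m ≤ f (L e) := by
      rw [hf, hf]
      simp only [L, e, sum_mul, mul_ite, mul_one, mul_zero, ite_mul, zero_mul]
      rw [sum_comm]
      simp only [sum_ite_eq, mem_univ, if_true, ← hj, mul_comm (m _)]
      exact h v
    linarith [hfP _ ⟨e, he, rfl⟩]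
  exact ⟨p, fun c => (hp c trivial).1, fun c => (hp c trivial).2, fun i => congrFun hpm i⟩

end Allocation

namespace Bathtub

variable {X ι : Type*} [Fintype ι]

/-- The function `λ_α` of the dual problem. -/
noncomputable def envelope (F : ι → X → ℝ) (α : ι → ℝ) (x : X) : ℝ :=
  ⨅ j, (F j x + α j)

noncomputable def minimizers (F : ι → X → ℝ) (α : ι → ℝ) (x : X) : Finset ι :=
  univ.filter fun i => F i x + α i = envelope F α x

section Envelope

variable (F : ι → X → ℝ) (α : ι → ℝ) (x : X)

theorem envelope_le (j : ι) : envelope F α x ≤ F j x + α j :=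
  Finite.ciInf_le _ j

theorem mem_minimizers {i : ι} : i ∈ minimizers F α x ↔ F i x + α i = envelope F α x := by
  simp [minimizers]

variable [Nonempty ι]

theorem minimizers_nonempty : (minimizers F α x).Nonempty :=
  let ⟨j, hj⟩ := exists_eq_ciInf_of_finite (f := fun j => F j x + α j)
  ⟨j, (mem_minimizers F α x).2 hj⟩

theorem envelope_add_const (t : ℝ) :
    envelope F (fun i => α i + t) x = envelope F α x + t := by
  simp only [envelope, ← add_assoc]
  exact (Monotone.map_ciInf_of_continuousAt (continuous_add_const t).continuousAt
    (fun _ _ h => add_le_add_left h t) (Set.finite_range _).bddBelow).symm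

theorem envelope_sub_envelope_le (β : ι → ℝ) : envelope F α x - envelope F β x ≤ dist α β := by
  obtain ⟨j, hj⟩ := minimizers_nonempty F β x
  rw [mem_minimizers] at hj
  have := (Real.dist_eq _ _ ▸ dist_le_pi_dist α β j : |α j - β j| ≤ dist α β)
  linarith [envelope_le F α x j, le_abs_self (α j - β j)]

theorem abs_envelope_sub_envelope_le (β : ι → ℝ) :
    |envelope F α x - envelope F β x| ≤ dist α β :=
  abs_sub_le_iff.2
    ⟨envelope_sub_envelope_le F α x β, dist_comm α β ▸ envelope_sub_envelope_le F β x α⟩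

theorem abs_envelope_le {C : ℝ} (hC : ∀ i, |F i x| ≤ C) : |envelope F α x| ≤ C + ‖α‖ := by
  obtain ⟨j, hj⟩ := minimizers_nonempty F α x
  rw [mem_minimizers] at hj
  have hα : ∀ i, |α i| ≤ ‖α‖ := fun i => norm_le_pi_norm α i
  rw [abs_le]
  constructor
  · linarith [neg_abs_le (F j x), neg_abs_le (α j), hC j, hα j]
  · obtain ⟨i⟩ := ‹Nonempty ι›
    linarith [envelope_le F α x i, le_abs_self (F i x), le_abs_self (α i), hC i, hα i]

theorem eventually_envelope_sub_smul (v : ι → ℝ) :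
    ∀ᶠ t in 𝓝[>] 0, envelope F (α - t • v) x =
      envelope F α x - t * (minimizers F α x).sup' (minimizers_nonempty F α x) v := by
  set w := (minimizers F α x).sup' (minimizers_nonempty F α x) v
  obtain ⟨j₀, hj₀, hj₀w⟩ := (minimizers F α x).exists_mem_eq_sup' (minimizers_nonempty F α x) v
  have hgap : ∀ᶠ t in 𝓝 (0 : ℝ), ∀ k ∉ minimizers F α x,
      t * (v k - w) < F k x + α k - envelope F α x := by
    refine eventually_all.2 fun k => ?_
    by_cases hk : k ∈ minimizers F α x
    · exact Eventually.of_forall fun _ h => (h hk).elim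
    refine (Tendsto.eventually_lt_const (v := 0) ?_ ?_).mono fun t ht _ => ht
    · exact sub_pos.2 <| (envelope_le F α x k).lt_of_ne fun h =>
        hk ((mem_minimizers F α x).2 h.symm)
    · simpa using (tendsto_id (x := 𝓝 (0:ℝ))).mul_const (v k - w)
  filter_upwards [self_mem_nhdsWithin, nhdsWithin_le_nhds hgap] with t (ht : 0 < t) hsmall
  have hsub : ∀ k, (α - t • v) k = α k - t * v k := fun k => rfl
  refine le_antisymm ?_ (le_ciInf fun k => ?_)
  · have := envelope_le F (α - t • v) x j₀
    rw [hsub, ← add_sub_assoc, (mem_minimizers F α x).1 hj₀] at this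
    rwa [show w = v j₀ from hj₀w]
  · rw [hsub]
    by_cases hk : k ∈ minimizers F α x
    · have := mul_le_mul_of_nonneg_left ((minimizers F α x).le_sup' v hk) ht.le
      linarith [(mem_minimizers F α x).1 hk]
    · linarith [hsmall k hk]

end Envelope

variable [MeasurableSpace X]

theorem measurable_envelope {F : ι → X → ℝ} (hF : ∀ i, Measurable (F i)) (α : ι → ℝ) :
    Measurable (envelope F α) :=
  Measurable.iInf fun j => (hF j).add_const _

theorem measurableSet_minimizers_eq {F : ι → X → ℝ} (hF : ∀ i, Measurable (F i)) (α : ι → ℝ)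
    (c : Finset ι) : MeasurableSet {x | minimizers F α x = c} := by
  have : {x | minimizers F α x = c} = ⋂ i, {x | F i x + α i = envelope F α x ↔ i ∈ c} := by
    ext x
    simp [Finset.ext_iff, mem_minimizers]
  rw [this]
  exact MeasurableSet.iInter fun i => measurableSet_setOfPred.2 <|
    (measurableSet_setOfPred.1 (measurableSet_eq_fun ((hF i).add_const _)
      (measurable_envelope hF α))).iff measurable_const

structure Feasible (μ : Measure X) (ω : X → ℝ) (m : ι → ℝ) (s : ι → X → ℝ) : Prop where
  integrable : ∀ i, Integrable (s i) μ
  nonneg : ∀ i, ∀ᵐ x ∂μ, 0 ≤ s i x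
  integral_eq : ∀ i, ∫ x, s i x ∂μ = m i
  sum_eq : ∀ᵐ x ∂μ, ∑ i, s i x = ω x

noncomputable def primal (μ : Measure X) (F : ι → X → ℝ) (s : ι → X → ℝ) : ℝ :=
  ∑ i, ∫ x, F i x * s i x ∂μ

noncomputable def dual (μ : Measure X) (ω : X → ℝ) (F : ι → X → ℝ) (m : ι → ℝ) (α : ι → ℝ) : ℝ :=
  (∫ x, envelope F α x * ω x ∂μ) - ∑ i, α i * m i

section Duality

variable {μ : Measure X} {ω : X → ℝ} {m : ι → ℝ} {C : ℝ}

theorem primal_congr_ae {F G : ι → X → ℝ} (h : ∀ᵐ x ∂μ, ∀ i, F i x = G i x) :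
    primal μ F = primal μ G :=
  funext fun s => sum_congr rfl fun i _ =>
    integral_congr_ae (h.mono fun x hx => by simp only [hx i])

theorem dual_congr_ae {F G : ι → X → ℝ} (h : ∀ᵐ x ∂μ, ∀ i, F i x = G i x) :
    dual μ ω F m = dual μ ω G m :=
  funext fun α => by
    simp only [dual, envelope]
    congr 1
    exact integral_congr_ae (h.mono fun x hx => by simp only [hx])

variable {F : ι → X → ℝ} [Nonempty ι]

theorem integrable_envelope_mul (hF : ∀ i, Measurable (F i)) (hC : ∀ᵐ x ∂μ, ∀ i, |F i x| ≤ C)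
    {g : X → ℝ} (hg : Integrable g μ) (α : ι → ℝ) :
    Integrable (fun x => envelope F α x * g x) μ :=
  hg.bdd_mul (measurable_envelope hF α).aestronglyMeasurable <|
    hC.mono fun x hx => abs_envelope_le F α x hx

theorem primal_sub_dual (hF : ∀ i, Measurable (F i)) (hC : ∀ᵐ x ∂μ, ∀ i, |F i x| ≤ C)
    {s : ι → X → ℝ} (hs : Feasible μ ω m s) (α : ι → ℝ) :
    primal μ F s - dual μ ω F m α =
      ∑ i, ∫ x, (F i x + α i - envelope F α x) * s i x ∂μ := by
  have hsplit : ∀ i, ∫ x, (F i x + α i - envelope F α x) * s i x ∂μ =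
      ∫ x, F i x * s i x ∂μ + α i * m i - ∫ x, envelope F α x * s i x ∂μ := by
    intro i
    have hFs : Integrable (fun x => F i x * s i x) μ :=
      (hs.integrable i).bdd_mul (hF i).aestronglyMeasurable (hC.mono fun x hx => hx i)
    have hαs := (hs.integrable i).const_mul (α i)
    have hes := integrable_envelope_mul hF hC (hs.integrable i) α
    simp_rw [add_sub_right_comm, add_mul, sub_mul]
    rw [integral_add (by exact hFs.sub hes) hαs, integral_sub hFs hes, integral_const_mul,
      hs.integral_eq i]
  have hω : ∫ x, envelope F α x * ω x ∂μ = ∑ i, ∫ x, envelope F α x * s i x ∂μ := by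
    rw [← integral_finsetSum _ fun i _ => integrable_envelope_mul hF hC (hs.integrable i) α]
    refine integral_congr_ae (hs.sum_eq.mono fun x hx => ?_)
    simp only [← mul_sum, hx]
  simp only [hsplit, primal, dual, hω, sum_add_distrib, sum_sub_distrib]
  ring

theorem dual_le_primal (hF : ∀ i, Measurable (F i)) (hC : ∀ᵐ x ∂μ, ∀ i, |F i x| ≤ C)
    {s : ι → X → ℝ} (hs : Feasible μ ω m s) (α : ι → ℝ) :
    dual μ ω F m α ≤ primal μ F s := by
  refine sub_nonneg.1 ((primal_sub_dual hF hC hs α).symm ▸ sum_nonneg fun i _ => ?_)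
  refine integral_nonneg_of_ae ((hs.nonneg i).mono fun x hx => ?_)
  exact mul_nonneg (sub_nonneg.2 (envelope_le F α x i)) hx

theorem primal_eq_dual_of_ae_support (hF : ∀ i, Measurable (F i)) (hC : ∀ᵐ x ∂μ, ∀ i, |F i x| ≤ C)
    {s : ι → X → ℝ} (hs : Feasible μ ω m s) {α : ι → ℝ}
    (hsupp : ∀ i, ∀ᵐ x ∂μ, i ∉ minimizers F α x → s i x = 0) :
    primal μ F s = dual μ ω F m α := by
  refine sub_eq_zero.1 ((primal_sub_dual hF hC hs α).trans (sum_eq_zero fun i _ => ?_))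
  refine integral_eq_zero_of_ae ((hsupp i).mono fun x hx => ?_)
  by_cases hi : i ∈ minimizers F α x
  · simp [(mem_minimizers F α x).1 hi]
  · simp [hx hi]

theorem dual_add_const (hF : ∀ i, Measurable (F i)) (hC : ∀ᵐ x ∂μ, ∀ i, |F i x| ≤ C)
    (hω : Integrable ω μ) (hmass : ∑ i, m i = ∫ x, ω x ∂μ) (α : ι → ℝ) (t : ℝ) :
    dual μ ω F m (fun i => α i + t) = dual μ ω F m α := by
  simp only [dual, envelope_add_const, add_mul, sum_add_distrib, ← mul_sum, hmass]
  rw [integral_add (integrable_envelope_mul hF hC hω α) (hω.const_mul t), integral_const_mul]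
  ring

theorem continuous_dual (hF : ∀ i, Measurable (F i)) (hC : ∀ᵐ x ∂μ, ∀ i, |F i x| ≤ C)
    (hω : Integrable ω μ) (hω0 : 0 ≤ᵐ[μ] ω) : Continuous (dual μ ω F m) := by
  have hlip : LipschitzWith (∫ x, ω x ∂μ).toNNReal fun α => ∫ x, envelope F α x * ω x ∂μ := by
    refine LipschitzWith.of_dist_le' fun α β => ?_
    rw [Real.dist_eq, ← integral_sub (integrable_envelope_mul hF hC hω α)
      (integrable_envelope_mul hF hC hω β), ← Real.norm_eq_abs, mul_comm, ← integral_const_mul]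
    refine norm_integral_le_of_norm_le (hω.const_mul _) (hω0.mono fun x hx => ?_)
    rw [← sub_mul, norm_mul, Real.norm_eq_abs, Real.norm_of_nonneg hx]
    exact mul_le_mul_of_nonneg_right (abs_envelope_sub_envelope_le F α x β) hx
  exact hlip.continuous.sub <| continuous_finsetSum _ fun i _ =>
    (continuous_apply i).mul continuous_const

theorem dual_le (hF : ∀ i, Measurable (F i)) (hC : ∀ᵐ x ∂μ, ∀ i, |F i x| ≤ C)
    (hω : Integrable ω μ) (hω0 : 0 ≤ᵐ[μ] ω) (α : ι → ℝ) (i : ι) :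
    dual μ ω F m α ≤ (C + α i) * ∫ x, ω x ∂μ - ∑ j, α j * m j := by
  rw [dual, ← integral_const_mul]
  refine sub_le_sub_right (integral_mono_ae (integrable_envelope_mul hF hC hω α)
    (hω.const_mul _) ?_) _
  filter_upwards [hC, hω0] with x hx hωx
  exact mul_le_mul_of_nonneg_right ((envelope_le F α x i).trans
    (add_le_add_left (le_of_abs_le (hx i)) _)) hωx

theorem neg_mul_le_dual_zero (hF : ∀ i, Measurable (F i)) (hC : ∀ᵐ x ∂μ, ∀ i, |F i x| ≤ C)
    (hω : Integrable ω μ) (hω0 : 0 ≤ᵐ[μ] ω) : -C * ∫ x, ω x ∂μ ≤ dual μ ω F m 0 := by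
  rw [dual, ← integral_const_mul]
  simp only [Pi.zero_apply, zero_mul, sum_const_zero, sub_zero]
  refine integral_mono_ae (hω.const_mul _) (integrable_envelope_mul hF hC hω 0) ?_
  filter_upwards [hC, hω0] with x hx hωx
  have := abs_envelope_le F 0 x hx
  rw [norm_zero, add_zero] at this
  exact mul_le_mul_of_nonneg_right (neg_le_of_abs_le this) hωx

theorem exists_forall_dual_le (hF : ∀ i, Measurable (F i)) (hC : ∀ᵐ x ∂μ, ∀ i, |F i x| ≤ C)
    (hω : Integrable ω μ) (hω0 : 0 ≤ᵐ[μ] ω) (hm : ∀ i, 0 < m i)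
    (hmass : ∑ i, m i = ∫ x, ω x ∂μ) : ∃ αb, ∀ α, dual μ ω F m α ≤ dual μ ω F m αb := by
  set W := ∫ x, ω x ∂μ
  have hW : 0 ≤ W := integral_nonneg_of_ae hω0
  obtain ⟨i₀, hi₀⟩ := Finite.exists_min m
  -- Once `min α = 0`, a coordinate of `α` above `R` already forces `J α < J 0`.
  set R := 2 * |C| * W / m i₀ + 1
  have hR0 : 0 ≤ R := by
    have := div_nonneg (mul_nonneg (by positivity : (0 : ℝ) ≤ 2 * |C|) hW) (hm i₀).le
    linarith
  have hR : 2 * |C| * W < R * m i₀ := by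
    rw [add_mul, div_mul_cancel₀ _ (hm i₀).ne']
    linarith [hm i₀]
  obtain ⟨αb, -, hαb⟩ := (isCompact_Icc (a := (0 : ι → ℝ)) (b := fun _ => R)).exists_isMaxOn
    ⟨0, le_rfl, fun _ => hR0⟩ (continuous_dual hF hC hω hω0).continuousOn
  refine ⟨αb, fun α => ?_⟩
  obtain ⟨i₁, hi₁⟩ := Finite.exists_min α
  set β : ι → ℝ := fun i => α i + -α i₁
  have hβ0 : ∀ i, 0 ≤ β i := fun i => by simp [β, hi₁ i]
  rw [← dual_add_const hF hC hω hmass α (-α i₁)]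
  by_cases hβR : ∀ i, β i ≤ R
  · exact hαb ⟨hβ0, hβR⟩
  obtain ⟨i₂, hi₂⟩ : ∃ i, R < β i := by simpa using hβR
  have hsum : R * m i₀ ≤ ∑ i, β i * m i :=
    (mul_le_mul hi₂.le (hi₀ i₂) (hm i₀).le (hβ0 i₂)).trans
      (single_le_sum (fun i _ => mul_nonneg (hβ0 i) (hm i).le) (mem_univ i₂))
  calc dual μ ω F m β ≤ (C + β i₁) * W - ∑ i, β i * m i := dual_le hF hC hω hω0 β i₁
    _ ≤ -C * W := by
      have : β i₁ = 0 := add_neg_cancel _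
      nlinarith [le_abs_self C]
    _ ≤ dual μ ω F m 0 := neg_mul_le_dual_zero hF hC hω hω0
    _ ≤ dual μ ω F m αb := hαb ⟨le_rfl, fun _ => hR0⟩

/-- The one-sided derivative of `J` at its maximizer in the direction `-v` is nonpositive. -/
theorem sum_mul_le_integral_sup'_mul (hF : ∀ i, Measurable (F i))
    (hC : ∀ᵐ x ∂μ, ∀ i, |F i x| ≤ C) (hω : Integrable ω μ) (hω0 : 0 ≤ᵐ[μ] ω) {αb : ι → ℝ}
    (hαb : ∀ α, dual μ ω F m α ≤ dual μ ω F m αb) (v : ι → ℝ) :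
    ∑ i, v i * m i ≤
      ∫ x, (minimizers F αb x).sup' (minimizers_nonempty F αb x) v * ω x ∂μ := by
  set g : ℝ → X → ℝ := fun t x => (envelope F αb x - envelope F (αb - t • v) x) * ω x / t
  have hlim : Tendsto (fun t => ∫ x, g t x ∂μ) (𝓝[>] 0)
      (𝓝 (∫ x, (minimizers F αb x).sup' (minimizers_nonempty F αb x) v * ω x ∂μ)) := by
    refine tendsto_integral_filter_of_dominated_convergence (fun x => ‖v‖ * ω x) ?_ ?_
      (hω.const_mul _) ?_
    · have := measurable_envelope hF
      have := hω.aestronglyMeasurable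
      exact Eventually.of_forall fun t => by fun_prop
    · filter_upwards [self_mem_nhdsWithin] with t (ht : 0 < t)
      filter_upwards [hω0] with x (hx : 0 ≤ ω x)
      have := abs_envelope_sub_envelope_le F αb x (αb - t • v)
      rw [dist_eq_norm, sub_sub_cancel, norm_smul, Real.norm_of_nonneg ht.le] at this
      rw [norm_div, norm_mul, Real.norm_of_nonneg hx, Real.norm_of_nonneg ht.le, div_le_iff₀ ht,
        Real.norm_eq_abs]
      nlinarith [mul_le_mul_of_nonneg_right this hx]
    · refine Eventually.of_forall fun x => tendsto_const_nhds.congr' ?_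
      filter_upwards [eventually_envelope_sub_smul F αb x v, self_mem_nhdsWithin]
        with t ht (ht0 : 0 < t)
      simp only [g, ht]
      field_simp
      ring
  refine ge_of_tendsto hlim ?_
  filter_upwards [self_mem_nhdsWithin] with t (ht : 0 < t)
  have h := hαb (αb - t • v)
  have hsum : ∑ i, (αb - t • v) i * m i = ∑ i, αb i * m i - t * ∑ i, v i * m i := by
    simp only [Pi.sub_apply, Pi.smul_apply, smul_eq_mul, sub_mul, sum_sub_distrib, mul_sum,
      mul_assoc]
  simp only [dual, hsum] at h
  simp only [g, integral_div, sub_mul]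
  rw [le_div_iff₀ ht, integral_sub (integrable_envelope_mul hF hC hω _)
    (integrable_envelope_mul hF hC hω _)]
  linarith

theorem exists_feasible_primal_eq_dual (hF : ∀ i, Measurable (F i))
    (hC : ∀ᵐ x ∂μ, ∀ i, |F i x| ≤ C) (hω : Integrable ω μ) (hω0 : 0 ≤ᵐ[μ] ω) {αb : ι → ℝ}
    (hαb : ∀ α, dual μ ω F m α ≤ dual μ ω F m αb) :
    ∃ sb, Feasible μ ω m sb ∧ primal μ F sb = dual μ ω F m αb := by
  let τ : X → {c : Finset ι // c.Nonempty} := fun x =>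
    ⟨minimizers F αb x, minimizers_nonempty F αb x⟩
  have hτ : ∀ c, MeasurableSet (τ ⁻¹' {c}) := fun c => by
    convert measurableSet_minimizers_eq hF αb c.1 using 1
    ext x
    simp [τ, Subtype.ext_iff]
  obtain ⟨p, hp, hpS, hpm⟩ := exists_stochastic_of_le_sum_sup' Subtype.val Subtype.prop
    (fun c => ∫ x in τ ⁻¹' {c}, ω x ∂μ) m fun v => by
      refine (sum_mul_le_integral_sup'_mul hF hC hω hω0 hαb v).trans_eq ?_
      exact (integral_comp_mul_eq_sum hτ hω fun c => c.1.sup' c.2 v).trans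
        (sum_congr rfl fun c _ => mul_comm _ _)
  have hsb : Feasible μ ω m fun i x => p (τ x) i * ω x :=
    { integrable := fun i => integrable_comp_mul hτ hω fun c => p c i
      nonneg := fun i => hω0.mono fun x hx => mul_nonneg ((hp _).1 i) hx
      integral_eq := fun i => (integral_comp_mul_eq_sum hτ hω fun c => p c i).trans <|
        (sum_congr rfl fun c _ => mul_comm _ _).trans (hpm i)
      sum_eq := Eventually.of_forall fun x => by rw [← sum_mul, (hp _).2, one_mul] }
  refine ⟨_, hsb, primal_eq_dual_of_ae_support hF hC hsb fun i =>
    Eventually.of_forall fun x hi => ?_⟩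
  simp [hpS (τ x) i hi]

theorem strong_duality (hF : ∀ i, AEStronglyMeasurable (F i) μ)
    (hC : ∀ i, ∀ᵐ x ∂μ, |F i x| ≤ C) (hω : Integrable ω μ) (hω0 : 0 ≤ᵐ[μ] ω)
    (hm : ∀ i, 0 < m i) (hmass : ∑ i, m i = ∫ x, ω x ∂μ) :
    ∃ sb αb, Feasible μ ω m sb ∧ (∀ s, Feasible μ ω m s → primal μ F sb ≤ primal μ F s) ∧
      (∀ α, dual μ ω F m α ≤ dual μ ω F m αb) ∧ primal μ F sb = dual μ ω F m αb := by
  set G := fun i => (hF i).mk (F i)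
  have hFG : ∀ᵐ x ∂μ, ∀ i, F i x = G i x := ae_all_iff.2 fun i => (hF i).ae_eq_mk
  have hG : ∀ i, Measurable (G i) := fun i => (hF i).stronglyMeasurable_mk.measurable
  have hGC : ∀ᵐ x ∂μ, ∀ i, |G i x| ≤ C := by
    filter_upwards [ae_all_iff.2 hC, hFG] with x hx hxG i
    exact hxG i ▸ hx i
  rw [primal_congr_ae hFG, dual_congr_ae hFG]
  obtain ⟨αb, hαb⟩ := exists_forall_dual_le hG hGC hω hω0 hm hmass
  obtain ⟨sb, hsb, heq⟩ := exists_feasible_primal_eq_dual hG hGC hω hω0 hαb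
  exact ⟨sb, αb, hsb, fun s hs => heq ▸ dual_le_primal hG hGC hs αb, hαb, heq⟩

end Duality

end Bathtub

theorem feasible_iff {d N : ℕ} (Ω : Set (Fin d → ℝ)) (ω : (Fin d → ℝ) → ℝ)
    (m : Fin (N + 1) → ℝ) (s : Fin (N + 1) → (Fin d → ℝ) → ℝ) :
    feasible Ω ω m s ↔ Bathtub.Feasible (volume.restrict Ω) ω m s :=
  ⟨fun ⟨h₁, h₂, h₃, h₄⟩ => ⟨h₁, h₂, h₃, h₄⟩, fun h => ⟨h.1, h.2, h.3, h.4⟩⟩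

theorem stmt_14_general {d N : ℕ}
    (Ω : Set (Fin d → ℝ)) (ω : (Fin d → ℝ) → ℝ) (hωint : IntegrableOn ω Ω)
    (hω0 : ∀ᵐ x ∂(volume.restrict Ω), 0 ≤ ω x)
    (m : Fin (N + 1) → ℝ) (hm : ∀ i, 0 < m i)
    (hmass : ∑ i, m i = ∫ x in Ω, ω x)
    (F : Fin (N + 1) → (Fin d → ℝ) → ℝ)
    (hFmeas : ∀ i, AEStronglyMeasurable (F i) (volume.restrict Ω))
    (hFbdd : ∃ C : ℝ, ∀ i, ∀ᵐ x ∂(volume.restrict Ω), |F i x| ≤ C) :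
    ∃ sb : Fin (N + 1) → (Fin d → ℝ) → ℝ, ∃ αb : Fin (N + 1) → ℝ,
      feasible Ω ω m sb ∧
      (∀ s, feasible Ω ω m s → primalF Ω F sb ≤ primalF Ω F s) ∧
      (∀ α, dualJ Ω ω F m α ≤ dualJ Ω ω F m αb) ∧
      primalF Ω F sb = dualJ Ω ω F m αb := by
  obtain ⟨C, hC⟩ := hFbdd
  obtain ⟨sb, αb, hsb, hopt, hαb, heq⟩ := Bathtub.strong_duality hFmeas hC hωint hω0 hm hmass
  exact ⟨sb, αb, (feasible_iff Ω ω m sb).2 hsb,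
    fun s hs => hopt s ((feasible_iff Ω ω m s).1 hs), hαb, heq⟩

/-- Strong duality for the multicomponent bathtub problem: both the primal
minimum and the dual maximum are attained and they coincide. -/
theorem stmt_14 {d N : ℕ}
    (Ω : Set (Fin d → ℝ)) (hΩ : MeasurableSet Ω)
    (ω : (Fin d → ℝ) → ℝ) (hωint : IntegrableOn ω Ω)
    (hω0 : ∀ᵐ x ∂(volume.restrict Ω), 0 ≤ ω x)
    (m : Fin (N + 1) → ℝ) (hm : ∀ i, 0 < m i)
    (hmass : ∑ i, m i = ∫ x in Ω, ω x)
    (F : Fin (N + 1) → (Fin d → ℝ) → ℝ)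
    (hFmeas : ∀ i, AEStronglyMeasurable (F i) (volume.restrict Ω))
    (hFbdd : ∃ C : ℝ, ∀ i, ∀ᵐ x ∂(volume.restrict Ω), |F i x| ≤ C) :
    ∃ sb : Fin (N + 1) → (Fin d → ℝ) → ℝ, ∃ αb : Fin (N + 1) → ℝ,
      feasible Ω ω m sb ∧
      (∀ s, feasible Ω ω m s → primalF Ω F sb ≤ primalF Ω F s) ∧
      (∀ α, dualJ Ω ω F m α ≤ dualJ Ω ω F m αb) ∧
      primalF Ω F sb = dualJ Ω ω F m αb :=
  stmt_14_general Ω ω hωint hω0 m hm hmass F hFmeas hFbdd
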